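/- arXiv:1908.10170 — 2 statements merged into one kernel-verified Lean document; each statement's English description precedes it below -/
import Mathlib

section
/- Let β > 0 and C ≥ 1, and let a : ℕ → ℕ be a nondecreasing sequence with a(0) ≥ 1 and (1/C)·e^{βn} ≤ a(n) ≤ C·e^{βn} for all n ≥ 1. Set s(0) = a(0) and s(k) = a(k) − a(k−1) for k ≥ 1. Then the sequence p_n = s(n)·e^{−βn} / Σ_{k=0}^{n} s(k)·e^{−βk} converges to 0 as n → ∞. -/
open Filter

/-- Let `β > 0`, `C ≥ 1`, and let `a : ℕ → ℕ` be a
nondecreasing sequence with `a 0 ≥ 1` and `(1/C) e^{βn} ≤ a n ≤ C e^{βn}`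
for all `n ≥ 1`.  With `s 0 = a 0` and `s k = a k - a (k-1)` for `k ≥ 1`,
the probabilities `p_n = s n * e^{-βn} / ∑_{k ≤ n} s k * e^{-βk}` tend
to `0` as `n → ∞`.  (This is the assertion `lim_n p_n(S_n) = 0` for the
spheres `S_n` of the balls `B_n`, under Coornaert's growth estimate.) -/
theorem sphere_probability_tendsto_zero (β C : ℝ) (hβ : 0 < β) (hC : 1 ≤ C)
    (a : ℕ → ℕ) (hmono : Monotone a) (ha0 : 1 ≤ a 0)
    (hbound : ∀ n : ℕ, 1 ≤ n →
      (1 / C) * Real.exp (β * n) ≤ (a n : ℝ) ∧ (a n : ℝ) ≤ C * Real.exp (β * n))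
    (s : ℕ → ℝ)
    (hs : ∀ k : ℕ, s k = if k = 0 then (a 0 : ℝ) else (a k : ℝ) - (a (k - 1) : ℝ)) :
    Tendsto
      (fun n : ℕ =>
        s n * Real.exp (-β * n) / ∑ k ∈ Finset.range (n + 1), s k * Real.exp (-β * k))
      atTop (nhds 0) := by
  have hC0 : (0:ℝ) < C := lt_of_lt_of_le one_pos hC
  have hexp1 : Real.exp (-β) < 1 := Real.exp_lt_one_iff.mpr (by linarith)
  set c : ℝ := (1 - Real.exp (-β)) / C with hc
  have hcpos : 0 < c := div_pos (by linarith) hC0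
  -- a n * exp(-βn) ≥ 1/C
  have hge : ∀ n : ℕ, 1 / C ≤ (a n : ℝ) * Real.exp (-β * n) := by
    intro n
    rcases Nat.eq_zero_or_pos n with h0 | h1
    · subst h0
      simp only [Nat.cast_zero, mul_zero, Real.exp_zero, mul_one]
      have : (1:ℝ) ≤ (a 0 : ℝ) := by exact_mod_cast ha0
      calc 1/C ≤ 1 := by
            rw [div_le_one hC0]; exact hC
        _ ≤ (a 0 : ℝ) := this
    · have hb := (hbound n h1).1
      have hpos : 0 < Real.exp (-β * n) := Real.exp_pos _
      have := mul_le_mul_of_nonneg_right hb hpos.le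
      rw [mul_assoc, ← Real.exp_add] at this
      simpa using this
  -- a n * exp(-βn) ≤ C for n ≥ 1
  have hle : ∀ n : ℕ, 1 ≤ n → (a n : ℝ) * Real.exp (-β * n) ≤ C := by
    intro n h1
    have hb := (hbound n h1).2
    have hpos : 0 < Real.exp (-β * n) := Real.exp_pos _
    have := mul_le_mul_of_nonneg_right hb hpos.le
    rw [mul_assoc, ← Real.exp_add] at this
    simpa using this
  -- key lower bound for the partial sums
  have key : ∀ n : ℕ, c * n + (a n : ℝ) * Real.exp (-β * n) ≤
      ∑ k ∈ Finset.range (n + 1), s k * Real.exp (-β * k) := by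
    intro n
    induction n with
    | zero => simp [hs 0]
    | succ n ih =>
      rw [Finset.sum_range_succ]
      have hsn : s (n + 1) = (a (n + 1) : ℝ) - (a n : ℝ) := by
        rw [hs (n + 1)]; simp
      have hmon : (a n : ℝ) ≤ (a (n + 1) : ℝ) := by
        exact_mod_cast hmono (Nat.le_succ n)
      have hesucc : Real.exp (-β * (n + 1 : ℕ)) = Real.exp (-β * n) * Real.exp (-β) := by
        rw [← Real.exp_add]; push_cast; ring_nf
      have hgen := hge n
      have h1 : c ≤ (a n : ℝ) * Real.exp (-β * n) * (1 - Real.exp (-β)) := by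
        have := mul_le_mul_of_nonneg_right hgen (by linarith : (0:ℝ) ≤ 1 - Real.exp (-β))
        calc c = 1 / C * (1 - Real.exp (-β)) := by rw [hc]; ring
          _ ≤ _ := this
      rw [hsn, hesucc]
      push_cast
      push_cast at ih
      nlinarith [Real.exp_pos (-β * n), Real.exp_pos (-β)]
  have hTpos : ∀ n : ℕ, 0 < ∑ k ∈ Finset.range (n + 1), s k * Real.exp (-β * k) := by
    intro n
    have h1 : 0 < c * n + (a n : ℝ) * Real.exp (-β * n) := by
      have := hge n
      have : (0:ℝ) < (a n : ℝ) * Real.exp (-β * n) := lt_of_lt_of_le (by positivity) this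
      positivity
    linarith [key n]
  -- squeeze
  have hupper : Tendsto (fun n : ℕ => (C / c) / (n : ℝ)) atTop (nhds 0) :=
    tendsto_const_div_atTop_nhds_zero_nat (C / c)
  apply tendsto_of_tendsto_of_tendsto_of_le_of_le' tendsto_const_nhds hupper
  · filter_upwards [eventually_ge_atTop 1] with n hn
    apply div_nonneg _ (hTpos n).le
    apply mul_nonneg _ (Real.exp_pos _).le
    rw [hs n]
    split
    · positivity
    · have : (a (n - 1) : ℝ) ≤ (a n : ℝ) := by exact_mod_cast hmono (Nat.sub_le n 1)
      linarith
  · filter_upwards [eventually_ge_atTop 1] with n hn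
    have hnum : s n * Real.exp (-β * n) ≤ C := by
      have hsle : s n ≤ (a n : ℝ) := by
        rw [hs n]
        split
        · next h => exact_mod_cast hmono (Nat.zero_le n)
        · have : (0:ℝ) ≤ (a (n - 1) : ℝ) := Nat.cast_nonneg _
          linarith
      calc s n * Real.exp (-β * n) ≤ (a n : ℝ) * Real.exp (-β * n) :=
            mul_le_mul_of_nonneg_right hsle (Real.exp_pos _).le
        _ ≤ C := hle n hn
    have hden : c * n ≤ ∑ k ∈ Finset.range (n + 1), s k * Real.exp (-β * k) := by
      have := key n
      have h2 : (0:ℝ) ≤ (a n : ℝ) * Real.exp (-β * n) := by positivity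
      linarith
    have hcn : (0:ℝ) < c * n := by
      have : (1:ℝ) ≤ (n:ℝ) := by exact_mod_cast hn
      nlinarith
    calc s n * Real.exp (-β * n) / ∑ k ∈ Finset.range (n + 1), s k * Real.exp (-β * k)
        ≤ C / (c * n) := div_le_div₀ hC0.le hnum hcn hden
      _ = (C / c) / (n : ℝ) := by field_simp
end

section
/- Let d ≥ 1 and let P be a polynomial. Then the class of graphs of polynomial growth P is hyperfinite: for every ε > 0 there exists a constant K_ε > 0 such that every finite graph G of maximum degree at most d satisfying |B_r(G,v)| ≤ P(r) for every vertex v ∈ V(G) and every r ≥ 1 admits a subset Y ⊆ V(G) with |Y| ≤ ε·|V(G)| such that after deleting Y and all edges incident to Y, every connected component of the remaining graph has at most K_ε vertices. -/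
universe u

/-- The graph obtained from `G` by deleting the vertex set `Y` together with
all edges incident to a vertex of `Y` (the deleted vertices are kept as
isolated vertices, which does not affect component sizes of the rest). -/
def removeVerts {V : Type*} (G : SimpleGraph V) (Y : Set V) : SimpleGraph V where
  Adj u v := G.Adj u v ∧ u ∉ Y ∧ v ∉ Y
  symm := by
    constructor
    intro u v h
    exact ⟨h.1.symm, h.2.2, h.2.1⟩
  loopless := by
    constructor
    intro v h
    exact G.loopless.irrefl v h.1

/-- The ball of radius `r` around `v` in `G`: all vertices at graph distance
at most `r` from `v`. -/
def graphBall {V : Type*} (G : SimpleGraph V) (v : V) (r : ℕ) : Set V :=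
  {w : V | G.edist v w ≤ (r : ℕ∞)}

/-!
Put `q = 1 + ε` and fix `R` with `P(R) < q ^ R` (polynomials grow slower than exponentials).
Let `H` be the subgraph induced on the set `S` of vertices not yet dealt with, and `v ∈ S`. The
ball sizes `|B_H(v, j)|` start at `1` and are below `q ^ R` at `j = R`, so some `r < R` has
`|B_H(v, r + 1)| ≤ q |B_H(v, r)|`: the sphere `B_H(v, r + 1) \ B_H(v, r)` has at most
`ε |B_H(v, r + 1)|` vertices. Deleting it cuts off `B_H(v, r)`, a piece of at most `P(R)` vertices,
and we recurse on `S \ B_H(v, r + 1)`. The deleted spheres are `ε`-fractions of disjoint balls, so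
at most `ε |V|` vertices are deleted in total.
-/

open SimpleGraph Filter Topology

theorem Polynomial.eventually_eval_lt_pow (P : Polynomial ℕ) {q : ℝ} (hq : 1 < q) :
    ∀ᶠ n : ℕ in atTop, ((P.eval n : ℕ) : ℝ) < q ^ n := by
  have hratio : Tendsto (fun n : ℕ => ((P.eval n : ℕ) : ℝ) / q ^ n) atTop (𝓝 0) := by
    simp only [Polynomial.eval_eq_sum_range, Nat.cast_sum, Nat.cast_mul, Finset.sum_div,
      mul_div_assoc]
    simpa using tendsto_finsetSum _ fun i _ =>
      (tendsto_pow_const_div_const_pow_of_one_lt i hq).const_mul (P.coeff i : ℝ)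
  filter_upwards [hratio.eventually_lt_const zero_lt_one] with n hn
  rwa [div_lt_one (by positivity)] at hn

theorem exists_lt_le_mul_of_lt_pow {a : ℕ → ℝ} {q : ℝ} (hq : 0 ≤ q) (ha : 1 ≤ a 0) {R : ℕ}
    (hR : a R < q ^ R) : ∃ r < R, a (r + 1) ≤ q * a r := by
  by_contra! hgrow
  have hpow : ∀ n ≤ R, q ^ n ≤ a n := by
    intro n hn
    induction n with
    | zero => simpa using ha
    | succ n ih =>
      calc q ^ (n + 1) = q * q ^ n := pow_succ' q n
        _ ≤ q * a n := mul_le_mul_of_nonneg_left (ih (by omega)) hq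
        _ ≤ a (n + 1) := (hgrow n (by omega)).le
  exact (hpow R le_rfl).not_gt hR

section removeVerts

variable {V : Type*} {G : SimpleGraph V}

theorem removeVerts_le (Y : Set V) : removeVerts G Y ≤ G := fun _ _ h => h.1

theorem ncard_supp_removeVerts_le_one {Y : Set V} {w : V} (hw : w ∈ Y) :
    ((removeVerts G Y).connectedComponentMk w).supp.ncard ≤ 1 := by
  refine (Set.ncard_le_ncard fun u hu => ?_).trans (Set.ncard_singleton w).le
  obtain ⟨p⟩ := (ConnectedComponent.exact ((ConnectedComponent.mem_supp_iff _ _).mp hu)).symm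
  cases p with
  | nil => exact Set.mem_singleton _
  | cons h _ => exact absurd hw h.2.1

theorem connectedComponentMk_supp_removeVerts_compl_subset {W : Set V} {w : V} (hw : w ∈ W) :
    ((removeVerts G Wᶜ).connectedComponentMk w).supp ⊆ W := by
  intro u hu
  obtain ⟨p⟩ := ConnectedComponent.exact ((ConnectedComponent.mem_supp_iff _ _).mp hu)
  cases p with
  | nil => exact hw
  | cons h _ => exact Set.notMem_compl_iff.mp h.2.1

theorem reachable_removeVerts_compl_of_closed {U W : Set V}
    (hW : ∀ x ∈ W, ∀ y ∈ U, G.Adj x y → y ∈ W) {a b : V} (p : (removeVerts G Uᶜ).Walk a b)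
    (ha : a ∈ W) : (removeVerts G Wᶜ).Reachable a b := by
  induction p with
  | nil => rfl
  | cons h _ ih =>
    have hc := hW _ ha _ (Set.notMem_compl_iff.mp h.2.2) h.1
    exact (Adj.reachable (G := removeVerts G Wᶜ)
      ⟨h.1, Set.notMem_compl_iff.mpr ha, Set.notMem_compl_iff.mpr hc⟩).trans (ih hc)

theorem connectedComponentMk_supp_removeVerts_compl_subset_of_closed {U W : Set V}
    (hW : ∀ x ∈ W, ∀ y ∈ U, G.Adj x y → y ∈ W) {w : V} (hw : w ∈ W) :
    ((removeVerts G Uᶜ).connectedComponentMk w).supp ⊆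
      ((removeVerts G Wᶜ).connectedComponentMk w).supp := by
  intro u hu
  obtain ⟨p⟩ := (ConnectedComponent.exact ((ConnectedComponent.mem_supp_iff _ _).mp hu)).symm
  exact (ConnectedComponent.mem_supp_iff _ _).mpr
    (ConnectedComponent.sound (reachable_removeVerts_compl_of_closed hW p hw).symm)

/-- Deleting `B' \ B` separates `B` from `S \ B'` when `B'` contains every neighbour of `B`
in `S`; so the components left after also deleting `Y` from `S \ B'` are those of `B` and
those of `(S \ B') \ Y`. -/
theorem ncard_supp_removeVerts_le_of_separated [Finite V] {S B B' Y : Set V} {K : ℕ}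
    (hsep : ∀ x ∈ B, ∀ y ∈ S, G.Adj x y → y ∈ B') (hK : 1 ≤ K) (hB : B.ncard ≤ K)
    (hY : ∀ w, ((removeVerts G ((S \ B') \ Y)ᶜ).connectedComponentMk w).supp.ncard ≤ K)
    (w : V) : ((removeVerts G (S \ (B' \ B ∪ Y))ᶜ).connectedComponentMk w).supp.ncard ≤ K := by
  set U := S \ (B' \ B ∪ Y)
  have hmem_B : ∀ y ∈ U, y ∈ B' → y ∈ B := fun y hy hyB' => by
    by_contra hyB
    exact hy.2 (Or.inl ⟨hyB', hyB⟩)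
  by_cases hwB : w ∈ B
  · have hclosed : ∀ x ∈ B, ∀ y ∈ U, G.Adj x y → y ∈ B := fun x hx y hy hxy =>
      hmem_B y hy (hsep x hx y hy.1 hxy)
    calc _ ≤ B.ncard := Set.ncard_le_ncard
          ((connectedComponentMk_supp_removeVerts_compl_subset_of_closed hclosed hwB).trans
            (connectedComponentMk_supp_removeVerts_compl_subset hwB))
      _ ≤ K := hB
  have hclosed : ∀ x ∈ (S \ B') \ Y, ∀ y ∈ U, G.Adj x y → y ∈ (S \ B') \ Y := by
    intro x hx y hy hxy
    have hyB' : y ∉ B' := fun hyB' =>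
      hx.1.2 (hsep y (hmem_B y hy hyB') x hx.1.1 hxy.symm)
    exact ⟨⟨hy.1, hyB'⟩, fun hyY => hy.2 (Or.inr hyY)⟩
  by_cases hwU : w ∈ U
  · have hw : w ∈ (S \ B') \ Y :=
      ⟨⟨hwU.1, fun hwB' => hwB (hmem_B w hwU hwB')⟩, fun hwY => hwU.2 (Or.inr hwY)⟩
    exact (Set.ncard_le_ncard
      (connectedComponentMk_supp_removeVerts_compl_subset_of_closed hclosed hw)).trans (hY w)
  · exact (ncard_supp_removeVerts_le_one (Set.mem_compl hwU)).trans hK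

end removeVerts

section graphBall

variable {V : Type*} {G : SimpleGraph V}

theorem mem_graphBall_self (v : V) (r : ℕ) : v ∈ graphBall G v r := by
  simp [graphBall]

theorem graphBall_mono (v : V) {r s : ℕ} (h : r ≤ s) : graphBall G v r ⊆ graphBall G v s :=
  fun _ (hw : G.edist v _ ≤ r) => hw.trans (by exact_mod_cast h)

theorem graphBall_anti {H : SimpleGraph V} (h : H ≤ G) (v : V) (r : ℕ) :
    graphBall H v r ⊆ graphBall G v r :=
  fun _ hw => (edist_anti h).trans hw

theorem mem_graphBall_succ_of_adj {v x y : V} {r : ℕ} (hx : x ∈ graphBall G v r)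
    (h : G.Adj x y) : y ∈ graphBall G v (r + 1) :=
  calc G.edist v y ≤ G.edist v x + G.edist x y := G.edist_triangle
    _ ≤ r + 1 := add_le_add hx (edist_eq_one_iff_adj.mpr h).le
    _ = (r + 1 : ℕ) := by push_cast; rfl

theorem graphBall_removeVerts_compl_subset {S : Set V} {v : V} (hv : v ∈ S) (r : ℕ) :
    graphBall (removeVerts G Sᶜ) v r ⊆ S := by
  intro w hw
  have hreach : (removeVerts G Sᶜ).Reachable v w :=
    edist_ne_top_iff_reachable.mp (ne_top_of_le_ne_top (ENat.natCast_ne_top r) hw)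
  exact connectedComponentMk_supp_removeVerts_compl_subset hv
    ((ConnectedComponent.mem_supp_iff _ _).mpr (ConnectedComponent.sound hreach.symm))

theorem exists_lt_ncard_graphBall_succ_le [Finite V] (v : V) {q : ℝ} (hq : 0 ≤ q) {R : ℕ}
    (hR : ((graphBall G v R).ncard : ℝ) < q ^ R) :
    ∃ r < R, ((graphBall G v (r + 1)).ncard : ℝ) ≤ q * (graphBall G v r).ncard :=
  exists_lt_le_mul_of_lt_pow (a := fun j => ((graphBall G v j).ncard : ℝ)) hq
    (by exact_mod_cast (Set.ncard_pos).mpr ⟨v, mem_graphBall_self v 0⟩) hR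

end graphBall

theorem ncard_sdiff_union_le_mul {V : Type*} [Finite V] {ε : ℝ} (hε : 0 ≤ ε)
    {B B' S Y : Set V} (hBB' : B ⊆ B') (hB'S : B' ⊆ S) (hB' : (B'.ncard : ℝ) ≤ (1 + ε) * B.ncard)
    (hY : (Y.ncard : ℝ) ≤ ε * (S \ B').ncard) : ((B' \ B ∪ Y).ncard : ℝ) ≤ ε * S.ncard := by
  have hB : ((B' \ B).ncard : ℝ) + B.ncard = B'.ncard := by
    exact_mod_cast Set.ncard_sdiff_add_ncard_of_subset hBB'
  have hS : ((S \ B').ncard : ℝ) + B'.ncard = S.ncard := by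
    exact_mod_cast Set.ncard_sdiff_add_ncard_of_subset hB'S
  have hunion : ((B' \ B ∪ Y).ncard : ℝ) ≤ (B' \ B).ncard + Y.ncard := by
    exact_mod_cast Set.ncard_union_le _ _
  nlinarith [mul_nonneg hε (Nat.cast_nonneg (B' \ B).ncard : (0 : ℝ) ≤ _)]

theorem exists_ncard_le_and_ncard_supp_removeVerts_le {V : Type*} [Finite V] (G : SimpleGraph V)
    {ε : ℝ} (hε : 0 ≤ ε) {R K : ℕ} (hK : (K : ℝ) < (1 + ε) ^ R)
    (hball : ∀ v, (graphBall G v R).ncard ≤ K) (S : Set V) :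
    ∃ Y : Set V, (Y.ncard : ℝ) ≤ ε * S.ncard ∧
      ∀ w, ((removeVerts G (S \ Y)ᶜ).connectedComponentMk w).supp.ncard ≤ K := by
  have hK1 (v : V) : 1 ≤ K :=
    ((Set.ncard_pos).mpr ⟨v, mem_graphBall_self v R⟩).trans_le (hball v)
  induction S using WellFoundedLT.induction with
  | _ S ih =>
  obtain rfl | ⟨v, hv⟩ := S.eq_empty_or_nonempty
  · exact ⟨∅, by simp, fun w => (ncard_supp_removeVerts_le_one (by simp)).trans (hK1 w)⟩
  set H := removeVerts G Sᶜ
  have hballH (j : ℕ) (hj : j ≤ R) : (graphBall H v j).ncard ≤ K :=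
    (Set.ncard_le_ncard ((graphBall_mono v hj).trans (graphBall_anti (removeVerts_le _) v R))).trans
      (hball v)
  obtain ⟨r, hrR, hsphere⟩ := exists_lt_ncard_graphBall_succ_le v (by linarith : 0 ≤ 1 + ε)
    (hK.trans_le' (by exact_mod_cast hballH R le_rfl))
  set B := graphBall H v r
  set B' := graphBall H v (r + 1)
  have hB'S : B' ⊆ S := graphBall_removeVerts_compl_subset hv _
  obtain ⟨Y, hYcard, hYcomp⟩ := ih (S \ B')
    (hB'S.sdiff_ssubset_of_nonempty ⟨v, mem_graphBall_self v _⟩)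
  refine ⟨B' \ B ∪ Y, ?_, ncard_supp_removeVerts_le_of_separated ?_ (hK1 v) (hballH r hrR.le) hYcomp⟩
  · exact ncard_sdiff_union_le_mul hε (graphBall_mono v r.le_succ) hB'S hsphere hYcard
  · intro x hx y hy hxy
    exact mem_graphBall_succ_of_adj hx
      ⟨hxy, Set.notMem_compl_iff.mpr (graphBall_removeVerts_compl_subset hv r hx),
        Set.notMem_compl_iff.mpr hy⟩

theorem polynomial_growth_hyperfinite_general (d : ℕ) (P : Polynomial ℕ)
    (ε : ℝ) (hε : 0 < ε) :
    ∃ K : ℕ, 0 < K ∧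
      ∀ (V : Type u) [Fintype V] (G : SimpleGraph V),
        (∀ v : V, (G.neighborSet v).ncard ≤ d) →
        (∀ (v : V) (r : ℕ), 1 ≤ r → (graphBall G v r).ncard ≤ P.eval r) →
        ∃ Y : Finset V,
          (Y.card : ℝ) ≤ ε * Fintype.card V ∧
          ∀ v : V,
            (((removeVerts G ↑Y).connectedComponentMk v).supp).ncard ≤ K := by
  obtain ⟨R, hPR, hR⟩ :=
    ((P.eventually_eval_lt_pow (by linarith : 1 < 1 + ε)).and (eventually_ge_atTop 1)).exists
  have hK : ((max (P.eval R) 1 : ℕ) : ℝ) < (1 + ε) ^ R := by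
    push_cast
    exact max_lt hPR (one_lt_pow₀ (by linarith) (by omega))
  refine ⟨max (P.eval R) 1, by positivity, fun V _ G _ hgrowth => ?_⟩
  obtain ⟨Y, hYcard, hYcomp⟩ := exists_ncard_le_and_ncard_supp_removeVerts_le G hε.le hK
    (fun v => (hgrowth v R hR).trans (le_max_left _ _)) Set.univ
  refine ⟨(Set.toFinite Y).toFinset, ?_, fun v => ?_⟩
  · simpa [← Set.ncard_eq_toFinset_card, Set.ncard_univ, Nat.card_eq_fintype_card] using hYcard
  · have hU : (Set.univ \ Y)ᶜ = Y := by rw [← Set.compl_eq_univ_sdiff, compl_compl]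
    rw [Set.Finite.coe_toFinset, ← hU]
    exact hYcomp v

/-- For `d ≥ 1` and a polynomial `P`, the class of finite
graphs of maximum degree at most `d` and of polynomial growth `P` (meaning
`|B_r(G,v)| ≤ P(r)` for every vertex `v` and every `r ≥ 1`) is hyperfinite:
for every `ε > 0` there is `K_ε > 0` such that every such graph `G` admits a
set `Y` of at most `ε |V(G)|` vertices whose deletion (with all incident
edges) leaves connected components of size at most `K_ε`. -/
theorem polynomial_growth_hyperfinite (d : ℕ) (hd : 1 ≤ d) (P : Polynomial ℕ)
    (ε : ℝ) (hε : 0 < ε) :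
    ∃ K : ℕ, 0 < K ∧
      ∀ (V : Type u) [Fintype V] (G : SimpleGraph V),
        (∀ v : V, (G.neighborSet v).ncard ≤ d) →
        (∀ (v : V) (r : ℕ), 1 ≤ r → (graphBall G v r).ncard ≤ P.eval r) →
        ∃ Y : Finset V,
          (Y.card : ℝ) ≤ ε * Fintype.card V ∧
          ∀ v : V,
            (((removeVerts G ↑Y).connectedComponentMk v).supp).ncard ≤ K :=
  polynomial_growth_hyperfinite_general d P ε hε
end
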